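/- arXiv:1003.0173 — 4 statements merged into one kernel-verified Lean document; each statement's English description precedes it below -/
import Mathlib

section
/- For all real τ > 0, 0 < p < 1 and every natural number k ≥ 1, lim_{h → 0+} (1/h) · (Γ(h/τ + k)/(k! · Γ(h/τ))) · p^{h/τ} · (1-p)^k = τ^{-1} (1-p)^k / k. (This identifies the infinitesimal jump probabilities of the Poisson gamma process.) -/
/-!
With `x = h / τ` one has `(1 / h) Γ(x + k) / Γ(x) = τ⁻¹ Γ(x + k) / (x Γ(x)) = τ⁻¹ Γ(x + k) / Γ(x + 1)`,
which is continuous at `x = 0` with value `τ⁻¹ Γ(k) = τ⁻¹ (k - 1)!`; dividing by `k!` and using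
`p ^ x → 1` gives `τ⁻¹ (1 - p) ^ k / k`.
-/

open Filter Real Topology

theorem Real.Gamma_natCast_div_factorial {k : ℕ} (hk : k ≠ 0) :
    Gamma k / k.factorial = (k : ℝ)⁻¹ := by
  obtain ⟨n, rfl⟩ := Nat.exists_eq_succ_of_ne_zero hk
  rw [Nat.cast_succ, Gamma_nat_eq_factorial, Nat.factorial_succ, Nat.cast_mul, ← Nat.cast_succ,
    div_mul_cancel_right₀ (by positivity)]

theorem Real.continuousAt_Gamma_add {s : ℝ} (hs : ∀ m : ℕ, s ≠ -m) :
    ContinuousAt (fun x => Gamma (x + s)) 0 :=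
  (differentiableAt_Gamma (by simpa using hs)).continuousAt.comp_of_eq
    (continuousAt_id.add continuousAt_const) (zero_add s)

theorem ne_neg_natCast_of_pos {s : ℝ} (hs : 0 < s) (m : ℕ) : s ≠ -m := by
  linarith [(m.cast_nonneg : (0 : ℝ) ≤ m)]

theorem Real.tendsto_Gamma_add_div_mul_Gamma {s : ℝ} (hs : ∀ m : ℕ, s ≠ -m) :
    Tendsto (fun x => Gamma (x + s) / (x * Gamma x)) (𝓝[≠] 0) (𝓝 (Gamma s)) := by
  have hlim : Tendsto (fun x => Gamma (x + s) / Gamma (x + 1)) (𝓝[≠] 0) (𝓝 (Gamma s)) := by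
    simpa [Pi.div_def] using ((continuousAt_Gamma_add hs).tendsto.div (continuousAt_Gamma_add
      (ne_neg_natCast_of_pos one_pos)).tendsto (by simp)).mono_left nhdsWithin_le_nhds
  refine hlim.congr' ?_
  filter_upwards [self_mem_nhdsWithin] with x hx
  rw [Gamma_add_one hx]

theorem poisson_gamma_infinitesimal_prob_general
    (τ p : ℝ) (hτ : 0 < τ) (hp0 : 0 < p) (k : ℕ) (hk : 1 ≤ k) :
    Tendsto
      (fun h : ℝ =>
        (1 / h) * (Real.Gamma (h / τ + k) / ((Nat.factorial k) * Real.Gamma (h / τ))) *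
          p ^ (h / τ) * (1 - p) ^ k)
      (nhdsWithin 0 (Set.Ioi 0))
      (nhds (τ⁻¹ * (1 - p) ^ k / k)) := by
  have hk0 : k ≠ 0 := Nat.one_le_iff_ne_zero.mp hk
  have hscale : Tendsto (· / τ) (𝓝[>] 0) (𝓝[≠] 0) :=
    tendsto_nhdsWithin_iff.mpr
      ⟨((continuous_id.div_const τ).tendsto' 0 0 (zero_div τ)).mono_left nhdsWithin_le_nhds,
        eventually_nhdsWithin_of_forall fun h hh => (div_pos hh hτ).ne'⟩
  have hGamma := tendsto_Gamma_add_div_mul_Gamma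
    (ne_neg_natCast_of_pos (Nat.cast_pos.mpr (Nat.pos_of_ne_zero hk0)))
  have hpow : Tendsto (fun x : ℝ => p ^ x) (𝓝[≠] 0) (𝓝 1) := by
    simpa using ((continuousAt_const_rpow hp0.ne').tendsto (x := (0 : ℝ))).mono_left
      nhdsWithin_le_nhds
  have hlim := (((hGamma.const_mul τ⁻¹).div_const (k.factorial : ℝ)).mul hpow).mul_const
    ((1 - p) ^ k) |>.comp hscale
  rw [mul_div_assoc, Gamma_natCast_div_factorial hk0, mul_one] at hlim
  convert hlim using 2
  · simp only [Function.comp_apply]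
    field_simp
  · ring

/-- The infinitesimal jump probabilities of the Poisson gamma process:
`lim_{h → 0+} (1/h) Γ(h/τ + k)/(k! Γ(h/τ)) p^{h/τ} (1-p)^k = τ⁻¹ (1-p)^k / k`. -/
theorem poisson_gamma_infinitesimal_prob
    (τ p : ℝ) (hτ : 0 < τ) (hp0 : 0 < p) (hp1 : p < 1) (k : ℕ) (hk : 1 ≤ k) :
    Tendsto
      (fun h : ℝ =>
        (1 / h) * (Real.Gamma (h / τ + k) / ((Nat.factorial k) * Real.Gamma (h / τ))) *
          p ^ (h / τ) * (1 - p) ^ k)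
      (nhdsWithin 0 (Set.Ioi 0))
      (nhds (τ⁻¹ * (1 - p) ^ k / k)) :=
  poisson_gamma_infinitesimal_prob_general τ p hτ hp0 k hk
end

section
/- For all real δ > 0, τ > 0, h > 0 and all natural numbers ñ ≥ 1 and 0 ≤ k ≤ ñ, setting a = h/τ and b = 1/(δτ), one has ∫_0^∞ C(ñ,k)(1 − e^{-x})^k e^{-(ñ−k)x} · (b^a x^{a-1} e^{-bx}/Γ(a)) dx = C(ñ,k) Σ_{j=0}^{k} C(k,j) (−1)^{k−j} (1 + δτ(ñ−j))^{−h/τ}. (This gives the increment probabilities of the binomial gamma process, the counting process of a linear death process with gamma-noise-driven rate.) -/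
/-!
Expanding `(1 - e^{-x})^k` binomially turns the integrand into a combination of the terms
`e^{-(ñ - j)x}` times the Gamma(`a`, `b`) density, and each of these integrates to the Laplace
transform `(b / (b + s))^a` of that density at `s = ñ - j`; with `b = 1/(δτ)` this is
`(1 + δτ(ñ - j))^{-a}`.
-/

open MeasureTheory Real

theorem one_sub_exp_neg_pow_mul_exp_neg (x m : ℝ) (k : ℕ) :
    (1 - exp (-x)) ^ k * exp (-((m - k) * x)) =
      ∑ j ∈ Finset.range (k + 1), (k.choose j : ℝ) * (-1) ^ (k - j) * exp (-((m - j) * x)) := by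
  rw [sub_eq_add_neg, add_pow, Finset.sum_mul]
  refine Finset.sum_congr rfl fun j hj => ?_
  have hjk : j ≤ k := Finset.mem_range_succ_iff.mp hj
  have hexp : exp (-x) ^ (k - j) * exp (-((m - k) * x)) = exp (-((m - j) * x)) := by
    rw [← exp_nat_mul, ← exp_add, Nat.cast_sub hjk]
    ring_nf
  rw [one_pow, one_mul, neg_pow, ← hexp]
  ring

section GammaLaplace

variable {a b s : ℝ}

theorem exp_neg_mul_mul_gamma_density (x : ℝ) :
    exp (-(s * x)) * (b ^ a * x ^ (a - 1) * exp (-(b * x)) / Gamma a) =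
      b ^ a / Gamma a * (x ^ (a - 1) * exp (-((b + s) * x))) := by
  rw [show (b + s) * x = b * x + s * x by ring, neg_add, exp_add]
  ring

theorem integrableOn_exp_neg_mul_mul_gamma_density (ha : 0 < a) (hbs : 0 < b + s) :
    IntegrableOn (fun x => exp (-(s * x)) * (b ^ a * x ^ (a - 1) * exp (-(b * x)) / Gamma a))
      (Set.Ioi 0) := by
  have hint : IntegrableOn (fun x : ℝ => x ^ (a - 1) * exp (-(b + s) * x ^ (1 : ℝ)))
      (Set.Ioi 0) :=
    integrableOn_rpow_mul_exp_neg_mul_rpow (by linarith) one_pos hbs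
  simp only [rpow_one, neg_mul] at hint
  simp only [exp_neg_mul_mul_gamma_density]
  exact hint.const_mul _

theorem integral_exp_neg_mul_mul_gamma_density (ha : 0 < a) (hb : 0 ≤ b) (hbs : 0 < b + s) :
    ∫ x in Set.Ioi 0, exp (-(s * x)) * (b ^ a * x ^ (a - 1) * exp (-(b * x)) / Gamma a) =
      (b / (b + s)) ^ a := by
  simp only [exp_neg_mul_mul_gamma_density]
  rw [integral_const_mul, integral_rpow_mul_exp_neg_mul_Ioi ha hbs, div_rpow hb hbs.le,
    one_div, inv_rpow hbs.le]
  field_simp [(Gamma_pos_of_pos ha).ne']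

end GammaLaplace

theorem binomial_gamma_increment_prob_general
    (δ τ h : ℝ) (hδ : 0 < δ) (hτ : 0 < τ) (hh : 0 < h)
    (n k : ℕ) (hk : k ≤ n)
    (a b : ℝ) (ha : a = h / τ) (hb : b = 1 / (δ * τ)) :
    ∫ x in Set.Ioi (0 : ℝ),
        (n.choose k : ℝ) * (1 - Real.exp (-x)) ^ k * Real.exp (-(((n : ℝ) - k) * x)) *
          (b ^ a * x ^ (a - 1) * Real.exp (-(b * x)) / Real.Gamma a)
      = (n.choose k : ℝ) *
          ∑ j ∈ Finset.range (k + 1),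
            (k.choose j : ℝ) * (-1 : ℝ) ^ (k - j) *
              (1 + δ * τ * ((n : ℝ) - j)) ^ (-(h / τ)) := by
  have ha0 : 0 < a := by rw [ha]; positivity
  have hb0 : 0 ≤ b := by rw [hb]; positivity
  have hnj : ∀ j ∈ Finset.range (k + 1), (0 : ℝ) ≤ n - j := fun j hj =>
    sub_nonneg.mpr (by exact_mod_cast (Finset.mem_range_succ_iff.mp hj).trans hk)
  have hbnj : ∀ j ∈ Finset.range (k + 1), 0 < b + (n - j) := fun j hj => by
    have := hnj j hj
    rw [hb]; positivity
  have hexpand : ∀ x : ℝ,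
      (n.choose k : ℝ) * (1 - exp (-x)) ^ k * exp (-((n - k) * x)) *
          (b ^ a * x ^ (a - 1) * exp (-(b * x)) / Gamma a) =
        ∑ j ∈ Finset.range (k + 1), (n.choose k : ℝ) * ((k.choose j : ℝ) * (-1) ^ (k - j) *
          (exp (-((n - j) * x)) * (b ^ a * x ^ (a - 1) * exp (-(b * x)) / Gamma a))) := by
    intro x
    rw [mul_assoc (n.choose k : ℝ), one_sub_exp_neg_pow_mul_exp_neg, Finset.mul_sum,
      Finset.sum_mul]
    simp only [mul_assoc]
  simp_rw [hexpand]
  rw [integral_finsetSum _ fun j hj =>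
    ((integrableOn_exp_neg_mul_mul_gamma_density ha0 (hbnj j hj)).const_mul _).const_mul _,
    Finset.mul_sum]
  refine Finset.sum_congr rfl fun j hj => ?_
  have h1nj : 0 ≤ 1 + δ * τ * (n - j) := by have := hnj j hj; positivity
  have hbase : b / (b + (n - j)) = (1 + δ * τ * (n - j))⁻¹ := by
    rw [hb]; field_simp
  rw [integral_const_mul, integral_const_mul,
    integral_exp_neg_mul_mul_gamma_density ha0 hb0 (hbnj j hj), hbase, inv_rpow h1nj,
    ← rpow_neg h1nj, ha]

/-- Increment probabilities of the binomial gamma process (counting process of a linear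
death process with gamma-noise-driven rate): integrating the binomial increment
probability against the gamma density gives the stated alternating sum.
Here `n` plays the role of `ñ`, the number of individuals still alive. -/
theorem binomial_gamma_increment_prob
    (δ τ h : ℝ) (hδ : 0 < δ) (hτ : 0 < τ) (hh : 0 < h)
    (n k : ℕ) (hn : 1 ≤ n) (hk : k ≤ n)
    (a b : ℝ) (ha : a = h / τ) (hb : b = 1 / (δ * τ)) :
    ∫ x in Set.Ioi (0 : ℝ),
        (n.choose k : ℝ) * (1 - Real.exp (-x)) ^ k * Real.exp (-(((n : ℝ) - k) * x)) *
          (b ^ a * x ^ (a - 1) * Real.exp (-(b * x)) / Real.Gamma a)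
      = (n.choose k : ℝ) *
          ∑ j ∈ Finset.range (k + 1),
            (k.choose j : ℝ) * (-1 : ℝ) ^ (k - j) *
              (1 + δ * τ * ((n : ℝ) - j)) ^ (-(h / τ)) :=
  binomial_gamma_increment_prob_general δ τ h hδ hτ hh n k hk a b ha hb
end

section
/- For all real δ > 0, τ > 0 and every natural number ñ, lim_{h → 0+} (1/h) · [ ñ^2 ((1+2δτ)^{−h/τ} − (1+δτ)^{−2h/τ}) + ñ((1+δτ)^{−h/τ} − (1+2δτ)^{−h/τ}) ] = ñ τ^{-1} ln(1+δτ) + ñ(ñ−1) τ^{-1} ln( (1+δτ)^2 / (1+2δτ) ). (This is the infinitesimal variance of the binomial gamma process when ñ individuals remain alive: the bracketed quantity equals ñ^2·Var[Π(h)] + ñ·E[Π(h)(1−Π(h))] for the random death probability Π(h) = 1 − e^{−δΔΓ(h)} with ΔΓ(h) ~ Gamma(h/τ, scale τ).) -/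
open Filter Real Topology

/-!
The bracket vanishes at `h = 0`, so the limit is its derivative there. Each term is
`a ^ (-(c * h / τ))`, whose derivative at `0` is `-(c * log a / τ)`; collecting the terms
gives `n² (2 log (1 + δτ) - log (1 + 2δτ)) / τ + n (log (1 + 2δτ) - log (1 + δτ)) / τ`,
which is the stated limit rearranged.
-/

theorem tendsto_inv_mul_nhdsGT_zero_of_hasDerivAt {g : ℝ → ℝ} {g' : ℝ}
    (hg : HasDerivAt g g' 0) (hg0 : g 0 = 0) :
    Tendsto (fun h => h⁻¹ * g h) (𝓝[>] 0) (𝓝 g') := by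
  simpa [hg0] using (hasDerivAt_iff_tendsto_slope_zero.mp hg).mono_left (nhdsGT_le_nhdsNE 0)

theorem hasDerivAt_rpow_neg_mul_div_zero {a : ℝ} (ha : 0 < a) (c τ : ℝ) :
    HasDerivAt (fun h => a ^ (-(c * h / τ))) (-(c * log a / τ)) 0 := by
  have hlin : HasDerivAt (fun h : ℝ => -(c * h / τ)) (-(c / τ)) 0 := by
    simpa using (((hasDerivAt_id (0 : ℝ)).const_mul c).div_const τ).fun_neg
  convert hlin.const_rpow ha using 1
  simp only [neg_zero, mul_zero, zero_div, rpow_zero, mul_one]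
  ring

/-- Infinitesimal variance of the binomial gamma process when `n` (i.e. `ñ`) individuals
remain alive. -/
theorem binomial_gamma_infinitesimal_variance
    (δ τ : ℝ) (hδ : 0 < δ) (hτ : 0 < τ) (n : ℕ) :
    Tendsto
      (fun h : ℝ =>
        (1 / h) *
          ((n : ℝ) ^ 2 * ((1 + 2 * δ * τ) ^ (-(h / τ)) - (1 + δ * τ) ^ (-(2 * h / τ))) +
            (n : ℝ) * ((1 + δ * τ) ^ (-(h / τ)) - (1 + 2 * δ * τ) ^ (-(h / τ)))))
      (nhdsWithin 0 (Set.Ioi 0))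
      (nhds ((n : ℝ) * τ⁻¹ * Real.log (1 + δ * τ) +
        (n : ℝ) * ((n : ℝ) - 1) * τ⁻¹ *
          Real.log ((1 + δ * τ) ^ 2 / (1 + 2 * δ * τ)))) := by
  have h1 : 0 < 1 + δ * τ := by positivity
  have h2 : 0 < 1 + 2 * δ * τ := by positivity
  have d1 : HasDerivAt (fun h => (1 + δ * τ) ^ (-(h / τ))) (-(log (1 + δ * τ) / τ)) 0 := by
    simpa using hasDerivAt_rpow_neg_mul_div_zero h1 1 τ
  have d2 : HasDerivAt (fun h => (1 + 2 * δ * τ) ^ (-(h / τ)))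
      (-(log (1 + 2 * δ * τ) / τ)) 0 := by
    simpa using hasDerivAt_rpow_neg_mul_div_zero h2 1 τ
  have d1' := hasDerivAt_rpow_neg_mul_div_zero h1 2 τ
  have hg := ((d2.sub d1').const_mul ((n : ℝ) ^ 2)).add ((d1.sub d2).const_mul (n : ℝ))
  simp_rw [one_div]
  convert tendsto_inv_mul_nhdsGT_zero_of_hasDerivAt hg (by simp) using 2
  · rfl
  rw [log_div (by positivity) h2.ne', log_pow]
  field_simp
  push_cast
  ring
end

section
/- For all real c > 0, δ > 0 and all natural numbers ñ ≥ 1 and 1 ≤ k ≤ ñ, setting α(h) = c(1 − e^{−δh}) and β(h) = c e^{−δh}, one has lim_{h → 0+} (1/h) · C(ñ,k) · Γ(c) Γ(k+α(h)) Γ(ñ−k+β(h)) / ( Γ(α(h)) Γ(β(h)) Γ(c+ñ) ) = C(ñ,k) · (Γ(k) Γ(c+ñ−k)/Γ(c+ñ)) · c δ. (This identifies the infinitesimal jump probabilities of the binomial beta process; note α(h)+β(h) = c, so the displayed expression is the beta-binomial probability of a jump of size k.) -/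
/-!
Near `a = 0` the Gamma function has a simple pole with residue `1` (`a Γ(a) = Γ(a + 1) → 1`),
so `1 / Γ(α(h)) ~ α(h) ~ c δ h` as `h → 0+`. Dividing by `h` leaves the factor `c δ`, while
every other Gamma factor is evaluated near a point of `(0, ∞)`, where Γ is continuous:
`Γ(k + α) → Γ(k)`, `Γ(ñ - k + β) → Γ(ñ - k + c)` and `Γ(c) / Γ(β) → 1`.
-/

open Filter Real Topology

namespace Real

lemma continuousAt_Gamma_of_pos {s : ℝ} (hs : 0 < s) : ContinuousAt Gamma s :=
  (differentiableOn_Gamma_Ioi.differentiableAt (Ioi_mem_nhds hs)).continuousAt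

lemma tendsto_self_mul_Gamma_nhds_zero : Tendsto (fun s : ℝ ↦ s * Gamma s) (𝓝[≠] 0) (𝓝 1) := by
  have hGamma_succ : Tendsto (fun s : ℝ ↦ Gamma (s + 1)) (𝓝 0) (𝓝 1) := by
    have := (continuousAt_Gamma_of_pos one_pos).tendsto.comp
      ((continuous_add_const (1 : ℝ)).tendsto' 0 1 (zero_add 1))
    rwa [Gamma_one] at this
  refine (hGamma_succ.mono_left nhdsWithin_le_nhds).congr' ?_
  filter_upwards [self_mem_nhdsWithin] with s hs using Gamma_add_one hs

lemma tendsto_inv_mul_Gamma_of_tendsto_div {ι : Type*} {l : Filter ι} {a g : ι → ℝ} {L : ℝ}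
    (ha : Tendsto a l (𝓝[≠] 0)) (hL : Tendsto (fun x ↦ a x / g x) l (𝓝 L)) :
    Tendsto (fun x ↦ (g x * Gamma (a x))⁻¹) l (𝓝 L) := by
  have := hL.mul ((tendsto_self_mul_Gamma_nhds_zero.comp ha).inv₀ one_ne_zero)
  rw [inv_one, mul_one] at this
  refine this.congr' ?_
  filter_upwards [ha self_mem_nhdsWithin] with x (hx : a x ≠ 0)
  simp only [Function.comp_apply, mul_inv, div_eq_mul_inv]
  field_simp

end Real

lemma HasDerivAt.tendsto_div_self_nhds_zero {f : ℝ → ℝ} {f' : ℝ} (hf : HasDerivAt f f' 0)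
    (h0 : f 0 = 0) : Tendsto (fun x ↦ f x / x) (𝓝[≠] 0) (𝓝 f') := by
  simpa [h0, div_eq_inv_mul] using hf.tendsto_slope_zero

/-- For `a + b = c` the expression under the limit is `1 / g` times the beta-binomial probability
of `k` successes out of `n` with shape parameters `a` and `b`. -/
lemma tendsto_betaBinomial_div_of_tendsto {ι : Type*} {l : Filter ι} {a b g : ι → ℝ}
    {c L : ℝ} {n k : ℕ} (hc : 0 < c) (hk1 : 1 ≤ k) (hk : k ≤ n)
    (ha : Tendsto a l (𝓝[≠] 0)) (ha_div : Tendsto (fun x ↦ a x / g x) l (𝓝 L))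
    (hb : Tendsto b l (𝓝 c)) :
    Tendsto (fun x ↦ (1 / g x) * ((n.choose k : ℝ) *
        (Gamma c * Gamma (k + a x) * Gamma (n - k + b x) /
          (Gamma (a x) * Gamma (b x) * Gamma (c + n)))))
      l (𝓝 ((n.choose k : ℝ) * (Gamma k * Gamma (c + n - k) / Gamma (c + n)) * L)) := by
  have hk_pos : (0 : ℝ) < k := by exact_mod_cast hk1
  have hnk_pos : (0 : ℝ) < n - k + c := by
    have : (k : ℝ) ≤ n := by exact_mod_cast hk
    linarith
  have hGamma_c : Gamma c ≠ 0 := (Gamma_pos_of_pos hc).ne'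
  have hden : Gamma c * Gamma (c + n) ≠ 0 :=
    mul_ne_zero hGamma_c (Gamma_pos_of_pos (by positivity)).ne'
  have hk_arg : Tendsto (fun x ↦ k + a x) l (𝓝 k) := by
    simpa using (ha.mono_right nhdsWithin_le_nhds).const_add (k : ℝ)
  have hregular : Tendsto (fun x ↦ (n.choose k : ℝ) *
      (Gamma c * Gamma (k + a x) * Gamma (n - k + b x) / (Gamma (b x) * Gamma (c + n)))) l
      (𝓝 ((n.choose k : ℝ) * (Gamma c * Gamma k * Gamma (n - k + c) / (Gamma c * Gamma (c + n))))) :=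
    tendsto_const_nhds.mul (((tendsto_const_nhds.mul
      ((continuousAt_Gamma_of_pos hk_pos).tendsto.comp hk_arg)).mul
      ((continuousAt_Gamma_of_pos hnk_pos).tendsto.comp (hb.const_add _))).div
      (((continuousAt_Gamma_of_pos hc).tendsto.comp hb).mul tendsto_const_nhds) hden)
  convert (tendsto_inv_mul_Gamma_of_tendsto_div ha ha_div).mul hregular using 2
  · ring
  · rw [show (c + n - k : ℝ) = n - k + c by ring]
    field_simp

theorem binomial_beta_infinitesimal_prob_general
    (c δ : ℝ) (hc : 0 < c) (hδ : 0 < δ)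
    (n k : ℕ) (hk1 : 1 ≤ k) (hk : k ≤ n)
    (α β : ℝ → ℝ)
    (hα : ∀ h : ℝ, α h = c * (1 - Real.exp (-(δ * h))))
    (hβ : ∀ h : ℝ, β h = c * Real.exp (-(δ * h))) :
    Tendsto
      (fun h : ℝ =>
        (1 / h) * ((n.choose k : ℝ) *
          (Real.Gamma c * Real.Gamma (k + α h) * Real.Gamma ((n : ℝ) - k + β h) /
            (Real.Gamma (α h) * Real.Gamma (β h) * Real.Gamma (c + n)))))
      (nhdsWithin 0 (Set.Ioi 0))
      (nhds ((n.choose k : ℝ) *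
        (Real.Gamma k * Real.Gamma (c + n - k) / Real.Gamma (c + n)) * c * δ)) := by
  obtain rfl : α = fun h ↦ c * (1 - exp (-(δ * h))) := funext hα
  obtain rfl : β = fun h ↦ c * exp (-(δ * h)) := funext hβ
  have hα_deriv : HasDerivAt (fun h ↦ c * (1 - exp (-(δ * h)))) (c * δ) 0 := by
    simpa using (((hasDerivAt_id' 0).const_mul δ).neg.exp.const_sub 1).const_mul c
  have hα_tendsto : Tendsto (fun h ↦ c * (1 - exp (-(δ * h)))) (𝓝[>] 0) (𝓝[≠] 0) := by
    refine tendsto_nhdsWithin_of_tendsto_nhds_of_eventually_within _ ?_ ?_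
    · simpa using hα_deriv.continuousAt.tendsto.mono_left nhdsWithin_le_nhds
    · filter_upwards [self_mem_nhdsWithin] with h (hh : 0 < h)
      exact (mul_pos hc (sub_pos.2 (exp_lt_one_iff.2 (by nlinarith)))).ne'
  have hβ_tendsto : Tendsto (fun h ↦ c * exp (-(δ * h))) (𝓝[>] 0) (𝓝 c) := by
    have : Continuous fun h ↦ c * exp (-(δ * h)) := by fun_prop
    simpa using this.continuousAt (x := 0) |>.tendsto.mono_left nhdsWithin_le_nhds
  simpa only [mul_assoc] using tendsto_betaBinomial_div_of_tendsto hc hk1 hk hα_tendsto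
    ((hα_deriv.tendsto_div_self_nhds_zero (by simp)).mono_left (nhdsGT_le_nhdsNE 0)) hβ_tendsto

/-- Infinitesimal jump probabilities of the binomial beta process: with
`α(h) = c(1 − e^{−δh})` and `β(h) = c e^{−δh}` (so `α(h)+β(h) = c`), the beta-binomial
probability of a jump of size `k` out of `n` (i.e. `ñ`) satisfies the stated limit. -/
theorem binomial_beta_infinitesimal_prob
    (c δ : ℝ) (hc : 0 < c) (hδ : 0 < δ)
    (n k : ℕ) (hn : 1 ≤ n) (hk1 : 1 ≤ k) (hk : k ≤ n)
    (α β : ℝ → ℝ)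
    (hα : ∀ h : ℝ, α h = c * (1 - Real.exp (-(δ * h))))
    (hβ : ∀ h : ℝ, β h = c * Real.exp (-(δ * h))) :
    Tendsto
      (fun h : ℝ =>
        (1 / h) * ((n.choose k : ℝ) *
          (Real.Gamma c * Real.Gamma (k + α h) * Real.Gamma ((n : ℝ) - k + β h) /
            (Real.Gamma (α h) * Real.Gamma (β h) * Real.Gamma (c + n)))))
      (nhdsWithin 0 (Set.Ioi 0))
      (nhds ((n.choose k : ℝ) *
        (Real.Gamma k * Real.Gamma (c + n - k) / Real.Gamma (c + n)) * c * δ)) :=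
  binomial_beta_infinitesimal_prob_general c δ hc hδ n k hk1 hk α β hα hβ
end
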